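/- arXiv:math/0104120 — 9 statements merged into one kernel-verified Lean document; each statement's English description precedes it below -/
import Mathlib

section
/- Let S be a closed p-convex subset of ℝⁿ with 0 < p < 1, meaning that for all x, y ∈ S and all λ, μ ≥ 0 with λ^p + μ^p = 1 we have λx + μy ∈ S, and assume S is symmetric (x ∈ S implies -x ∈ S) and 0 ∈ S. Then for every 0 < θ < 1, the θ-geometric hull Γ_θ S is contained in (p^(-1/p)·(1-θ)^(1-1/p)) · S, where Γ_θ S is the set of all convergent sums (1-θ)·Σ_{k=0}^∞ λ_k x_k with |λ_k| ≤ θ^k and x_k ∈ S. -/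
open Pointwise

/-- The `θ`-geometric hull of a set `S`: all convergent sums
`(1-θ) • ∑ₖ λₖ • xₖ` with `|λₖ| ≤ θ^k` and `xₖ ∈ S`. -/
def geomHull {E : Type*} [NormedAddCommGroup E] [NormedSpace ℝ E]
    (θ : ℝ) (S : Set E) : Set E :=
  {y | ∃ (c : ℕ → ℝ) (x : ℕ → E), (∀ k, |c k| ≤ θ ^ k) ∧ (∀ k, x k ∈ S) ∧
    HasSum (fun k => ((1 - θ) * c k) • x k) y}

/-!
Absorb the signs of the coefficients into the points (S is symmetric) and scale by `M⁻¹`, where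
`M = p^(-1/p) (1-θ)^(1-1/p)`: the point becomes `∑ aₖ xₖ` with `xₖ ∈ S`, `aₖ ≥ 0` and
`aₖ^p ≤ p(1-θ) θ^(pk)`, so `∑ aₖ^p ≤ p(1-θ)/(1-θ^p) ≤ 1` by Bernoulli's inequality
`θ^p ≤ 1 - p(1-θ)`. A p-convex set containing `0` is closed under such combinations: two points
combine as `a x + b y = (a^p + b^p)^(1/p) w` with `w ∈ S`, hence by induction finite sums do, a
factor `(∑ aₖ^p)^(1/p) ≤ 1` keeps `w` in S, and closedness of S passes to the limit.
-/

open Finset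

def IsPConvex {E : Type*} [AddCommGroup E] [Module ℝ E] (p : ℝ) (S : Set E) : Prop :=
  ∀ x ∈ S, ∀ y ∈ S, ∀ a b : ℝ, 0 ≤ a → 0 ≤ b → a ^ p + b ^ p = 1 → a • x + b • y ∈ S

namespace IsPConvex

variable {E : Type*} [AddCommGroup E] [Module ℝ E] {p : ℝ} {S : Set E}

theorem smul_mem (hS : IsPConvex p S) (hp : 0 < p) (h0 : 0 ∈ S) {x : E} (hx : x ∈ S)
    {t : ℝ} (ht0 : 0 ≤ t) (ht1 : t ≤ 1) : t • x ∈ S := by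
  have htp : t ^ p ≤ 1 := Real.rpow_le_one ht0 ht1 hp.le
  simpa using hS x hx 0 h0 t ((1 - t ^ p) ^ p⁻¹) ht0 (by positivity)
    (by rw [Real.rpow_inv_rpow (by linarith) hp.ne']; ring)

theorem exists_add_eq_smul (hS : IsPConvex p S) (hp : p ≠ 0) (h0 : 0 ∈ S) {x y : E}
    (hx : x ∈ S) (hy : y ∈ S) {a b : ℝ} (ha : 0 ≤ a) (hb : 0 ≤ b) :
    ∃ w ∈ S, a • x + b • y = (a ^ p + b ^ p) ^ p⁻¹ • w := by
  have hap : 0 ≤ a ^ p := Real.rpow_nonneg ha p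
  have hbp : 0 ≤ b ^ p := Real.rpow_nonneg hb p
  set T := (a ^ p + b ^ p) ^ p⁻¹
  have hT : T ^ p = a ^ p + b ^ p := Real.rpow_inv_rpow (by positivity) hp
  rcases (show 0 ≤ T by positivity).eq_or_lt with hT0 | hT0
  · have hsum : a ^ p + b ^ p = 0 := by rw [← hT, ← hT0, Real.zero_rpow hp]
    obtain ⟨ha0, hb0⟩ := (add_eq_zero_iff_of_nonneg hap hbp).1 hsum
    rw [Real.rpow_eq_zero ha hp] at ha0
    rw [Real.rpow_eq_zero hb hp] at hb0
    exact ⟨0, h0, by simp [ha0, hb0]⟩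
  · refine ⟨(a / T) • x + (b / T) • y,
      hS x hx y hy _ _ (by positivity) (by positivity) ?_, ?_⟩
    · rw [Real.div_rpow ha hT0.le, Real.div_rpow hb hT0.le, ← add_div, ← hT,
        div_self (Real.rpow_pos_of_pos hT0 p).ne']
    · rw [smul_add, smul_smul, smul_smul, mul_div_cancel₀ _ hT0.ne',
        mul_div_cancel₀ _ hT0.ne']

theorem exists_sum_eq_smul (hS : IsPConvex p S) (hp : p ≠ 0) (h0 : 0 ∈ S) {ι : Type*}
    (s : Finset ι) {a : ι → ℝ} {x : ι → E} (ha : ∀ i ∈ s, 0 ≤ a i) (hx : ∀ i ∈ s, x i ∈ S) :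
    ∃ w ∈ S, ∑ i ∈ s, a i • x i = (∑ i ∈ s, a i ^ p) ^ p⁻¹ • w := by
  classical
  induction s using Finset.induction_on with
  | empty => exact ⟨0, h0, by simp⟩
  | insert j s hj ih =>
    have ha' i (hi : i ∈ s) : 0 ≤ a i := ha i (mem_insert_of_mem hi)
    obtain ⟨w, hw, hsum⟩ := ih ha' (fun i hi => hx i (mem_insert_of_mem hi))
    have hs : 0 ≤ ∑ i ∈ s, a i ^ p := sum_nonneg fun i hi => Real.rpow_nonneg (ha' i hi) p
    obtain ⟨w', hw', hadd⟩ := hS.exists_add_eq_smul hp h0 (hx j (mem_insert_self j s)) hw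
      (ha j (mem_insert_self j s)) (Real.rpow_nonneg hs p⁻¹)
    refine ⟨w', hw', ?_⟩
    rw [sum_insert hj, sum_insert hj, hsum, hadd, Real.rpow_inv_rpow hs hp]

theorem sum_mem (hS : IsPConvex p S) (hp : 0 < p) (h0 : 0 ∈ S) {ι : Type*} (s : Finset ι)
    {a : ι → ℝ} {x : ι → E} (ha : ∀ i ∈ s, 0 ≤ a i) (hx : ∀ i ∈ s, x i ∈ S)
    (has : ∑ i ∈ s, a i ^ p ≤ 1) : ∑ i ∈ s, a i • x i ∈ S := by
  obtain ⟨w, hw, hsum⟩ := hS.exists_sum_eq_smul hp.ne' h0 s ha hx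
  have hs : 0 ≤ ∑ i ∈ s, a i ^ p := sum_nonneg fun i hi => Real.rpow_nonneg (ha i hi) p
  exact hsum ▸ hS.smul_mem hp h0 hw (Real.rpow_nonneg hs _)
    (Real.rpow_le_one hs has (inv_nonneg.2 hp.le))

theorem mem_of_hasSum [TopologicalSpace E] (hS : IsPConvex p S) (hp : 0 < p) (h0 : 0 ∈ S)
    (hclosed : IsClosed S) {ι : Type*} {a : ι → ℝ} {x : ι → E} (ha : ∀ i, 0 ≤ a i)
    (hx : ∀ i, x i ∈ S) (has : ∀ s : Finset ι, ∑ i ∈ s, a i ^ p ≤ 1) {y : E}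
    (hy : HasSum (fun i => a i • x i) y) : y ∈ S :=
  hclosed.mem_of_tendsto hy <| .of_forall fun s =>
    hS.sum_mem hp h0 s (fun i _ => ha i) (fun i _ => hx i) (has s)

end IsPConvex

theorem exists_smul_eq_abs_smul {E : Type*} [AddCommGroup E] [Module ℝ E] {S : Set E}
    (hsymm : ∀ x ∈ S, -x ∈ S) {x : E} (hx : x ∈ S) (c : ℝ) :
    ∃ x' ∈ S, c • x = |c| • x' := by
  rcases le_or_gt 0 c with hc | hc
  · exact ⟨x, hx, by rw [abs_of_nonneg hc]⟩
  · exact ⟨-x, hsymm x hx, by rw [abs_of_neg hc, neg_smul_neg]⟩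

theorem rpow_inv_mul_abs_mul_le {p θ c : ℝ} {k : ℕ} (hp0 : 0 < p) (hθ0 : 0 ≤ θ) (hθ1 : θ < 1)
    (hc : |c| ≤ θ ^ k) :
    ((p ^ (-(1 / p)) * (1 - θ) ^ (1 - 1 / p))⁻¹ * |(1 - θ) * c|) ^ p ≤
      p * (1 - θ) * (θ ^ p) ^ k := by
  have hθ' : 0 < 1 - θ := by linarith
  have hconst :
      (p ^ (-(1 / p)) * (1 - θ) ^ (1 - 1 / p))⁻¹ * (1 - θ) = (p * (1 - θ)) ^ (1 / p) := by
    rw [Real.mul_rpow hp0.le hθ'.le, mul_inv, ← Real.rpow_neg hp0.le, neg_neg, mul_assoc,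
      ← Real.rpow_neg hθ'.le, ← Real.rpow_add_one hθ'.ne', neg_sub, sub_add_cancel]
  have hcoef : (p ^ (-(1 / p)) * (1 - θ) ^ (1 - 1 / p))⁻¹ * |(1 - θ) * c| ≤
      (p * (1 - θ)) ^ (1 / p) * θ ^ k := by
    rw [abs_mul, abs_of_pos hθ', ← mul_assoc, hconst]
    exact mul_le_mul_of_nonneg_left hc (by positivity)
  calc _ ≤ ((p * (1 - θ)) ^ (1 / p) * θ ^ k) ^ p :=
        Real.rpow_le_rpow (by positivity) hcoef hp0.le
    _ = p * (1 - θ) * (θ ^ p) ^ k := by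
      rw [Real.mul_rpow (by positivity) (by positivity), ← Real.rpow_mul (by positivity),
        one_div_mul_cancel hp0.ne', Real.rpow_one, Real.rpow_pow_comm hθ0]

theorem sum_mul_rpow_geometric_le_one {p θ : ℝ} (hp0 : 0 < p) (hp1 : p ≤ 1) (hθ0 : 0 ≤ θ)
    (hθ1 : θ < 1) (s : Finset ℕ) : ∑ k ∈ s, p * (1 - θ) * (θ ^ p) ^ k ≤ 1 := by
  have hθ' : 0 ≤ 1 - θ := by linarith
  have hθp0 : 0 ≤ θ ^ p := Real.rpow_nonneg hθ0 p
  have hθp1 : θ ^ p < 1 := Real.rpow_lt_one hθ0 hθ1 hp0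
  have bernoulli : θ ^ p ≤ 1 + p * (θ - 1) := by
    simpa using rpow_one_add_le_one_add_mul_self (s := θ - 1) (by linarith) hp0.le hp1
  calc ∑ k ∈ s, p * (1 - θ) * (θ ^ p) ^ k
      ≤ p * (1 - θ) * (1 - θ ^ p)⁻¹ :=
        sum_le_hasSum s (fun k _ => by positivity)
          ((hasSum_geometric_of_lt_one hθp0 hθp1).mul_left _)
    _ ≤ 1 := by
        rw [← div_eq_mul_inv, div_le_one (by linarith)]
        linarith

theorem stmt_2 (n : ℕ) (p θ : ℝ) (hp0 : 0 < p) (hp1 : p < 1) (hθ0 : 0 < θ) (hθ1 : θ < 1)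
    (S : Set (EuclideanSpace ℝ (Fin n))) (hclosed : IsClosed S) (h0 : (0 : EuclideanSpace ℝ (Fin n)) ∈ S)
    (hsymm : ∀ x ∈ S, -x ∈ S)
    (hpconv : ∀ x ∈ S, ∀ y ∈ S, ∀ a b : ℝ, 0 ≤ a → 0 ≤ b → a ^ p + b ^ p = 1 →
      a • x + b • y ∈ S) :
    geomHull θ S ⊆ (p ^ (-(1 / p)) * (1 - θ) ^ (1 - 1 / p)) • S := by
  set M : ℝ := p ^ (-(1 / p)) * (1 - θ) ^ (1 - 1 / p)
  have hM : 0 < M := by positivity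
  rintro y ⟨c, x, hc, hx, hy⟩
  choose x' hx' hcx using fun k => exists_smul_eq_abs_smul hsymm (hx k) ((1 - θ) * c k)
  refine Set.mem_smul_set.2 ⟨M⁻¹ • y, ?_, smul_inv_smul₀ hM.ne' y⟩
  refine IsPConvex.mem_of_hasSum hpconv hp0 h0 hclosed (a := fun k => M⁻¹ * |(1 - θ) * c k|)
    (fun k => by positivity) hx' (fun s => ?_) ?_
  · exact (sum_le_sum fun k _ => rpow_inv_mul_abs_mul_le hp0 hθ0.le hθ1 (hc k)).trans
      (sum_mul_rpow_geometric_le_one hp0 hp1.le hθ0.le hθ1 s)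
  · simpa only [hcx, smul_smul] using hy.const_smul M⁻¹
end

section
/- For any subset S of ℝⁿ and any 0 < α < θ < 1, the α-geometric hull satisfies Γ_α S ⊆ ((1-α)/(1-θ)) · Γ_θ S. -/
open Pointwise

section

variable {E : Type*} [NormedAddCommGroup E] [NormedSpace ℝ E] {S : Set E} {α θ : ℝ}

/-- The coefficients of an `α`-representation are admissible for `θ ≥ α`; only the normalising
factor changes, from `1 - α` to `1 - θ`. -/
theorem smul_mem_geomHull_of_le (hα : 0 ≤ α) (hαθ : α ≤ θ) (hθ : θ < 1) {y : E}
    (hy : y ∈ geomHull α S) : ((1 - θ) / (1 - α)) • y ∈ geomHull θ S := by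
  obtain ⟨c, x, hc, hx, hsum⟩ := hy
  have hα1 : 1 - α ≠ 0 := by linarith
  refine ⟨c, x, fun k => (hc k).trans (pow_le_pow_left₀ hα hαθ k), hx, ?_⟩
  convert hsum.const_smul ((1 - θ) / (1 - α)) using 2 with k
  rw [smul_smul]
  field_simp

theorem geomHull_subset_smul_geomHull (hα : 0 ≤ α) (hαθ : α ≤ θ) (hθ : θ < 1) :
    geomHull α S ⊆ ((1 - α) / (1 - θ)) • geomHull θ S := by
  intro y hy
  have hα1 : 1 - α ≠ 0 := by linarith
  have hθ1 : 1 - θ ≠ 0 := by linarith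
  refine ⟨_, smul_mem_geomHull_of_le hα hαθ hθ hy, ?_⟩
  dsimp only
  rw [smul_smul, div_mul_div_cancel₀ hθ1, div_self hα1, one_smul]

end

theorem stmt_3 (n : ℕ) (S : Set (EuclideanSpace ℝ (Fin n))) (α θ : ℝ)
    (hα0 : 0 < α) (hαθ : α < θ) (hθ1 : θ < 1) :
    geomHull α S ⊆ ((1 - α) / (1 - θ)) • geomHull θ S :=
  geomHull_subset_smul_geomHull hα0.le hαθ.le hθ1
end

section
/- For any real θ with 1/3 < θ < 1 and any positive integer m, (θ^{-1} - 1)/(m·(θ^{-1/m} - 1)) ≤ (θ^{-1} - 1)/|ln θ| ≤ 2/(3 - θ^{-1}). -/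
/-!
Put `t = θ⁻¹ ∈ (1, 3)`, so that `|log θ| = log t`. The first inequality is
`log t = m · log t^{1/m} ≤ m (t^{1/m} - 1)`, from `log x ≤ x - 1`. The second is
`(t - 1)(3 - t) ≤ 2 log t` for `t ≥ 1`: both sides vanish at `t = 1`, and the derivative of
their difference is `2 (t - 1)² / t ≥ 0`.
-/

open Real Set

namespace Real

lemma log_le_mul_rpow_one_div_sub_one {x r : ℝ} (hx : 0 < x) (hr : 0 < r) :
    log x ≤ r * (x ^ (1 / r) - 1) := by
  calc log x = r * log (x ^ (1 / r)) := by rw [log_rpow hx]; field_simp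
    _ ≤ r * (x ^ (1 / r) - 1) := by gcongr; exact log_le_sub_one_of_pos (rpow_pos_of_pos hx _)

lemma sub_one_mul_three_sub_le_two_mul_log {t : ℝ} (ht : 1 ≤ t) :
    (t - 1) * (3 - t) ≤ 2 * log t := by
  let f : ℝ → ℝ := fun x ↦ 2 * log x - (x - 1) * (3 - x)
  have hderiv : ∀ x ∈ Ioi (1 : ℝ), HasDerivAt f (2 * x⁻¹ - (4 - 2 * x)) x := fun x hx ↦ by
    have hx0 : x ≠ 0 := (zero_lt_one.trans hx).ne'
    exact (((hasDerivAt_log hx0).const_mul 2).sub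
      (((hasDerivAt_id' x).sub_const 1).mul ((hasDerivAt_id' x).const_sub 3))).congr_deriv
      (by ring)
  have hmono : MonotoneOn f (Ici 1) := by
    refine monotoneOn_of_hasDerivWithinAt_nonneg (f' := fun x ↦ 2 * x⁻¹ - (4 - 2 * x))
      (convex_Ici 1) ?_ ?_ ?_
    · intro x hx
      have hx0 : x ≠ 0 := (zero_lt_one.trans_le hx).ne'
      fun_prop (disch := exact hx0)
    · rw [interior_Ici]
      exact fun x hx ↦ (hderiv x hx).hasDerivWithinAt
    · rw [interior_Ici]
      intro x (hx : 1 < x)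
      have hx0 : 0 < x := zero_lt_one.trans hx
      have hsq : 2 * x⁻¹ - (4 - 2 * x) = 2 * (x - 1) ^ 2 / x := by field_simp; ring
      rw [hsq]
      positivity
  have hf := hmono self_mem_Ici ht ht
  simp only [f, log_one] at hf
  linarith

end Real

theorem stmt_5 (θ : ℝ) (m : ℕ) (hθ0 : 1 / 3 < θ) (hθ1 : θ < 1) (hm : 0 < m) :
    (θ⁻¹ - 1) / (m * (θ ^ (-(1 / (m : ℝ))) - 1)) ≤ (θ⁻¹ - 1) / |Real.log θ| ∧
    (θ⁻¹ - 1) / |Real.log θ| ≤ 2 / (3 - θ⁻¹) := by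
  have hθ : 0 < θ := by linarith
  have ht1 : 1 < θ⁻¹ := one_lt_inv_iff₀.mpr ⟨hθ, hθ1⟩
  have ht3 : θ⁻¹ < 3 := by
    rw [inv_lt_comm₀ hθ (by norm_num)]
    linarith
  have habs : |log θ| = log θ⁻¹ := by rw [log_inv, abs_of_neg (log_neg hθ hθ1)]
  have hlog : 0 < log θ⁻¹ := log_pos ht1
  rw [habs, rpow_neg_eq_inv_rpow]
  constructor
  · exact div_le_div_of_nonneg_left (by linarith) hlog
      (log_le_mul_rpow_one_div_sub_one (inv_pos.mpr hθ) (by exact_mod_cast hm))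
  · rw [div_le_div_iff₀ hlog (by linarith)]
    nlinarith [sub_one_mul_three_sub_le_two_mul_log ht1.le]
end

section
/- Let X be a real normed space and for each positive integer N let b_N denote the least constant such that for every choice of vectors x_1, …, x_N ∈ X there is a choice of signs ε_k = ±1 with ‖Σ ε_k x_k‖ ≤ b_N · N · max_k ‖x_k‖. Then for all positive integers k, l: b_{kl} ≤ b_k · b_l, and (k+l)·b_{k+l} ≤ k·b_k + l·b_l. -/
/-!
Splitting `kl` vectors into `l` blocks of `k`, first balance each block with signs and then
balance the `l` block sums: each block sum has norm at most `b_k k max‖x‖`, so the total has norm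
at most `b_l l b_k k max‖x‖`. Splitting `k + l` vectors into a block of `k` and a block of `l`
and balancing each separately gives the second inequality by the triangle inequality.
-/

/-- `b` is the least constant such that for every `N` vectors `x₁,…,x_N` in `X`
there exist signs `ε_k = ±1` with `‖∑ ε_k x_k‖ ≤ b · N · max_k ‖x_k‖`. -/
def IsLeastSignBalance (X : Type*) [NormedAddCommGroup X] [NormedSpace ℝ X]
    (N : ℕ) (b : ℝ) : Prop :=
  IsLeast {c : ℝ | 0 ≤ c ∧ ∀ x : Fin N → X, ∃ ε : Fin N → ℝ,
    (∀ k, ε k = 1 ∨ ε k = -1) ∧ ‖∑ k, ε k • x k‖ ≤ c * N * ⨆ k, ‖x k‖} b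

/-- The factor `N` is absorbed into the constant: `b` is admissible for `b_N` iff
`IsSignBalanced (Fin N) X (b * N)`. -/
def IsSignBalanced (ι X : Type*) [Fintype ι] [NormedAddCommGroup X] [NormedSpace ℝ X]
    (c : ℝ) : Prop :=
  ∀ x : ι → X, ∃ ε : ι → ℝ, (∀ i, ε i = 1 ∨ ε i = -1) ∧ ‖∑ i, ε i • x i‖ ≤ c * ⨆ i, ‖x i‖

lemma iSup_norm_comp_le {ι κ X : Type*} [Finite ι] [NormedAddCommGroup X] (x : ι → X)
    (f : κ → ι) : ⨆ j, ‖x (f j)‖ ≤ ⨆ i, ‖x i‖ :=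
  Real.iSup_le (fun j => le_ciSup (f := fun i => ‖x i‖) (Finite.bddAbove_range _) (f j))
    (Real.iSup_nonneg fun _ => norm_nonneg _)

namespace IsSignBalanced

variable {ι κ X : Type*} [Fintype ι] [Fintype κ] [NormedAddCommGroup X] [NormedSpace ℝ X]

lemma of_equiv {c : ℝ} (h : IsSignBalanced ι X c) (e : ι ≃ κ) : IsSignBalanced κ X c := by
  intro x
  obtain ⟨ε, hε, hbound⟩ := h (x ∘ e)
  refine ⟨ε ∘ e.symm, fun j => hε _, ?_⟩
  rw [← e.sum_comp, ← e.iSup_comp]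
  simpa [Function.comp_def] using hbound

lemma prod {a b : ℝ} (ha : 0 ≤ a) (hb : 0 ≤ b) (hι : IsSignBalanced ι X a)
    (hκ : IsSignBalanced κ X b) : IsSignBalanced (ι × κ) X (a * b) := by
  intro x
  choose ε hε hεbound using fun j : κ => hι fun i => x (i, j)
  set y : κ → X := fun j => ∑ i, ε j i • x (i, j)
  obtain ⟨δ, hδ, hδbound⟩ := hκ y
  refine ⟨fun p => δ p.2 * ε p.2 p.1, fun p => ?_, ?_⟩
  · rcases hδ p.2 with h | h <;> rcases hε p.2 p.1 with h' | h' <;> simp [h, h']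
  have hsum : ∑ p : ι × κ, (δ p.2 * ε p.2 p.1) • x p = ∑ j, δ j • y j := by
    simp only [y, Fintype.sum_prod_type_right, Finset.smul_sum, mul_smul]
  have hy : ⨆ j, ‖y j‖ ≤ a * ⨆ p, ‖x p‖ :=
    Real.iSup_le (fun j => (hεbound j).trans <|
        mul_le_mul_of_nonneg_left (iSup_norm_comp_le x fun i => (i, j)) ha)
      (mul_nonneg ha (Real.iSup_nonneg fun _ => norm_nonneg _))
  calc ‖∑ p : ι × κ, (δ p.2 * ε p.2 p.1) • x p‖ = ‖∑ j, δ j • y j‖ := by rw [hsum]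
    _ ≤ b * ⨆ j, ‖y j‖ := hδbound
    _ ≤ b * (a * ⨆ p, ‖x p‖) := mul_le_mul_of_nonneg_left hy hb
    _ = a * b * ⨆ p, ‖x p‖ := by ring

lemma sum {a b : ℝ} (ha : 0 ≤ a) (hb : 0 ≤ b) (hι : IsSignBalanced ι X a)
    (hκ : IsSignBalanced κ X b) : IsSignBalanced (ι ⊕ κ) X (a + b) := by
  intro x
  obtain ⟨ε, hε, hεbound⟩ := hι fun i => x (Sum.inl i)
  obtain ⟨δ, hδ, hδbound⟩ := hκ fun j => x (Sum.inr j)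
  refine ⟨Sum.elim ε δ, Sum.forall.2 ⟨hε, hδ⟩, ?_⟩
  simp only [Fintype.sum_sum_type, Sum.elim_inl, Sum.elim_inr]
  calc ‖∑ i, ε i • x (Sum.inl i) + ∑ j, δ j • x (Sum.inr j)‖
      ≤ a * (⨆ i, ‖x (Sum.inl i)‖) + b * ⨆ j, ‖x (Sum.inr j)‖ :=
        (norm_add_le _ _).trans (add_le_add hεbound hδbound)
    _ ≤ a * (⨆ p, ‖x p‖) + b * ⨆ p, ‖x p‖ := by
        gcongr
        exacts [iSup_norm_comp_le x Sum.inl, iSup_norm_comp_le x Sum.inr]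
    _ = (a + b) * ⨆ p, ‖x p‖ := by ring

end IsSignBalanced

namespace IsLeastSignBalance

variable {X : Type*} [NormedAddCommGroup X] [NormedSpace ℝ X] {N : ℕ} {b : ℝ}

lemma nonneg (h : IsLeastSignBalance X N b) : 0 ≤ b := h.1.1

lemma isSignBalanced (h : IsLeastSignBalance X N b) : IsSignBalanced (Fin N) X (b * N) := h.1.2

lemma le_of_isSignBalanced (h : IsLeastSignBalance X N b) {c : ℝ} (hc : 0 ≤ c)
    (hbal : IsSignBalanced (Fin N) X (c * N)) : b ≤ c :=
  h.2 ⟨hc, hbal⟩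

lemma natCast_mul_le_of_isSignBalanced (h : IsLeastSignBalance X N b) {C : ℝ} (hC : 0 ≤ C)
    (hbal : IsSignBalanced (Fin N) X C) : N * b ≤ C := by
  rcases N.eq_zero_or_pos with rfl | hN
  · simpa using hC
  have hN' : (0 : ℝ) < N := Nat.cast_pos.2 hN
  have hb : b ≤ C / N :=
    h.le_of_isSignBalanced (by positivity) (by rwa [div_mul_cancel₀ C hN'.ne'])
  rwa [le_div_iff₀ hN', mul_comm] at hb

end IsLeastSignBalance

theorem stmt_6_general {X : Type*} [NormedAddCommGroup X] [NormedSpace ℝ X]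
    (k l : ℕ) (bk bl bkl bkpl : ℝ)
    (h1 : IsLeastSignBalance X k bk) (h2 : IsLeastSignBalance X l bl)
    (h3 : IsLeastSignBalance X (k * l) bkl) (h4 : IsLeastSignBalance X (k + l) bkpl) :
    bkl ≤ bk * bl ∧ ((k : ℝ) + l) * bkpl ≤ k * bk + l * bl := by
  have hbk := mul_nonneg h1.nonneg k.cast_nonneg
  have hbl := mul_nonneg h2.nonneg l.cast_nonneg
  constructor
  · refine h3.le_of_isSignBalanced (mul_nonneg h1.nonneg h2.nonneg) ?_
    have hbal := (h1.isSignBalanced.prod hbk hbl h2.isSignBalanced).of_equiv finProdFinEquiv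
    convert hbal using 1
    push_cast
    ring
  · have hbal := (h1.isSignBalanced.sum hbk hbl h2.isSignBalanced).of_equiv finSumFinEquiv
    have hbound := h4.natCast_mul_le_of_isSignBalanced (add_nonneg hbk hbl) hbal
    push_cast at hbound
    linarith

theorem stmt_6 {X : Type*} [NormedAddCommGroup X] [NormedSpace ℝ X]
    (k l : ℕ) (hk : 0 < k) (hl : 0 < l) (bk bl bkl bkpl : ℝ)
    (h1 : IsLeastSignBalance X k bk) (h2 : IsLeastSignBalance X l bl)
    (h3 : IsLeastSignBalance X (k * l) bkl) (h4 : IsLeastSignBalance X (k + l) bkpl) :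
    bkl ≤ bk * bl ∧ ((k : ℝ) + l) * bkpl ≤ k * bk + l * bl :=
  stmt_6_general k l bk bl bkl bkpl h1 h2 h3 h4
end

section
/- Let X be a real normed space with sign-balancing constants b_N (the least constant such that for any N vectors there exist signs with ‖Σ ε_k x_k‖ ≤ b_N·N·max‖x_k‖). If b_k ≤ c₀ < 1 for some k, then b_l ≤ (1+c₀)/2 < 1 for every l with k ≤ l ≤ 2k. -/
def IsSignBalance (X : Type*) [NormedAddCommGroup X] [NormedSpace ℝ X] (N : ℕ) (c : ℝ) : Prop :=
  0 ≤ c ∧ ∀ x : Fin N → X, ∃ ε : Fin N → ℝ,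
    (∀ k, ε k = 1 ∨ ε k = -1) ∧ ‖∑ k, ε k • x k‖ ≤ c * N * ⨆ k, ‖x k‖

theorem norm_le_iSup_norm {ι E : Type*} [Finite ι] [SeminormedAddGroup E] (x : ι → E) (i : ι) :
    ‖x i‖ ≤ ⨆ j, ‖x j‖ :=
  le_ciSup (Finite.bddAbove_range fun j => ‖x j‖) i

theorem iSup_norm_nonneg {ι E : Type*} [SeminormedAddGroup E] (x : ι → E) : 0 ≤ ⨆ j, ‖x j‖ :=
  Real.iSup_nonneg fun _ => norm_nonneg _

section SignBalance

variable {X : Type*} [NormedAddCommGroup X] [NormedSpace ℝ X]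

theorem isSignBalance_one (N : ℕ) : IsSignBalance X N 1 := by
  refine ⟨zero_le_one, fun x => ⟨fun _ => 1, fun _ => Or.inl rfl, ?_⟩⟩
  simp only [one_smul, one_mul]
  calc ‖∑ k, x k‖ ≤ ∑ k, ‖x k‖ := norm_sum_le _ _
    _ ≤ ∑ _k : Fin N, ⨆ j, ‖x j‖ := Finset.sum_le_sum fun k _ => norm_le_iSup_norm x k
    _ = N * ⨆ j, ‖x j‖ := by simp

/-- The inequality `(k + m) b_{k+m} ≤ k b_k + m b_m`, by concatenating sign choices. -/
theorem IsSignBalance.add {k m : ℕ} {c d e : ℝ} (hc : IsSignBalance X k c)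
    (hd : IsSignBalance X m d) (he : 0 ≤ e) (hcde : k * c + m * d ≤ (k + m) * e) :
    IsSignBalance X (k + m) e := by
  refine ⟨he, fun x => ?_⟩
  set M := ⨆ i, ‖x i‖
  obtain ⟨ε, hε, hx₁⟩ := hc.2 fun i => x (Fin.castAdd m i)
  obtain ⟨δ, hδ, hx₂⟩ := hd.2 fun i => x (Fin.natAdd k i)
  have hM₁ : ⨆ i, ‖x (Fin.castAdd m i)‖ ≤ M :=
    Real.iSup_le (fun i => norm_le_iSup_norm x _) (iSup_norm_nonneg x)
  have hM₂ : ⨆ i, ‖x (Fin.natAdd k i)‖ ≤ M :=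
    Real.iSup_le (fun i => norm_le_iSup_norm x _) (iSup_norm_nonneg x)
  refine ⟨Fin.append ε δ, Fin.addCases (by simpa using hε) (by simpa using hδ), ?_⟩
  rw [Fin.sum_univ_add]
  simp only [Fin.append_left, Fin.append_right]
  calc _ ≤ ‖∑ i, ε i • x (Fin.castAdd m i)‖ + ‖∑ i, δ i • x (Fin.natAdd k i)‖ :=
        norm_add_le _ _
    _ ≤ c * k * M + d * m * M :=
        add_le_add (hx₁.trans (mul_le_mul_of_nonneg_left hM₁ (mul_nonneg hc.1 k.cast_nonneg)))
          (hx₂.trans (mul_le_mul_of_nonneg_left hM₂ (mul_nonneg hd.1 m.cast_nonneg)))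
    _ = (k * c + m * d) * M := by ring
    _ ≤ (k + m) * e * M := by gcongr; exact iSup_norm_nonneg x
    _ = e * ↑(k + m) * M := by push_cast; ring

end SignBalance

theorem stmt_7_general {X : Type*} [NormedAddCommGroup X] [NormedSpace ℝ X]
    (b : ℕ → ℝ) (hb : ∀ N, IsLeastSignBalance X N (b N))
    (k : ℕ) (c₀ : ℝ) (hbk : b k ≤ c₀) (hc₀ : c₀ < 1) :
    ∀ l : ℕ, k ≤ l → l ≤ 2 * k → b l ≤ (1 + c₀) / 2 ∧ (1 + c₀) / 2 < 1 := by
  intro l hkl hl2k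
  obtain ⟨m, rfl⟩ := Nat.exists_eq_add_of_le hkl
  have hbk_nonneg : 0 ≤ b k := (hb k).1.1
  have hmk : (m : ℝ) ≤ k := by exact_mod_cast (by omega : m ≤ k)
  have hkbk : (k : ℝ) * b k ≤ k * c₀ := mul_le_mul_of_nonneg_left hbk k.cast_nonneg
  have hgap : 0 ≤ ((k : ℝ) - m) * (1 - c₀) := mul_nonneg (by linarith) (by linarith)
  have hbalance : IsSignBalance X (k + m) ((1 + c₀) / 2) :=
    IsSignBalance.add (hb k).1 (isSignBalance_one m) (by linarith) (by linarith)
  exact ⟨(hb (k + m)).2 hbalance, by linarith⟩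

theorem stmt_7 {X : Type*} [NormedAddCommGroup X] [NormedSpace ℝ X]
    (b : ℕ → ℝ) (hb : ∀ N, IsLeastSignBalance X N (b N))
    (k : ℕ) (hk : 0 < k) (c₀ : ℝ) (hbk : b k ≤ c₀) (hc₀ : c₀ < 1) :
    ∀ l : ℕ, k ≤ l → l ≤ 2 * k → b l ≤ (1 + c₀) / 2 ∧ (1 + c₀) / 2 < 1 :=
  stmt_7_general b hb k c₀ hbk hc₀
end

section
/- Let S be a compact spanning subset of ℝⁿ with absolutely convex hull ΔS equal to the unit ball of a norm ‖·‖_X, and let b_N be the sign-balancing constants of (ℝⁿ, ‖·‖_X). Then for every positive integers N and m: Δ_{2^k m} S ⊆ Δ_m S + (Σ_{j=1}^k b_{2^j m})·ΔS for every k ≥ 1, where Δ_m S = {(1/m)Σ_{i=1}^m λ_i x_i : |λ_i| ≤ 1, x_i ∈ S}. -/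
open Pointwise

/-- `Δ_m S`: the set of averages `(1/m) • ∑ₖ λₖ • xₖ` with `|λₖ| ≤ 1`, `xₖ ∈ S`. -/
def deltaM {E : Type*} [NormedAddCommGroup E] [NormedSpace ℝ E]
    (m : ℕ) (S : Set E) : Set E :=
  {y | ∃ (c : Fin m → ℝ) (x : Fin m → E), (∀ k, |c k| ≤ 1) ∧ (∀ k, x k ∈ S) ∧
    y = (m : ℝ)⁻¹ • ∑ k, c k • x k}

/-- `b` is the least constant such that for any `N` vectors there are signs `ε_k = ±1`
with `ν (∑ ε_k x_k) ≤ b · N · max_k ν (x_k)`, where `ν` is a given norm function. -/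
def IsLeastSignBalanceFor {E : Type*} [NormedAddCommGroup E] [NormedSpace ℝ E]
    (ν : E → ℝ) (N : ℕ) (b : ℝ) : Prop :=
  IsLeast {c : ℝ | 0 ≤ c ∧ ∀ x : Fin N → E, ∃ ε : Fin N → ℝ,
    (∀ k, ε k = 1 ∨ ε k = -1) ∧ ν (∑ k, ε k • x k) ≤ c * N * ⨆ k, ν (x k)} b

/-!
Take `y = (2N)⁻¹ ∑ₖ cₖ xₖ ∈ Δ_{2N} S` and put `vₖ = cₖ xₖ`, so `‖vₖ‖_X ≤ 1`. Sign balancing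
gives `εₖ = ±1` with `‖∑ εₖ vₖ‖_X ≤ b_{2N} · 2N`; flipping all signs if necessary, at most `N`
of them are `-1`. Since `∑ vₖ = 2 ∑_{εₖ = -1} vₖ + ∑ εₖ vₖ`, the point `y` is the element
`N⁻¹ ∑_{εₖ = -1} vₖ` of `Δ_N S` (padded with zero coefficients) plus an error in `b_{2N} · ΔS`.
Iterating this along `N = 2^{k-1} m, …, 2m, m` and collecting the errors with
`s • ΔS + t • ΔS = (s + t) • ΔS` (convexity) gives the claim.
-/

open Finset

section SignSums

variable {ι E : Type*} [Fintype ι] [AddCommGroup E] [Module ℝ E]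

theorem sum_eq_two_smul_sum_filter_add_sum_sign_smul (v : ι → E) {ε : ι → ℝ}
    (hε : ∀ k, ε k = 1 ∨ ε k = -1) :
    ∑ k, v k = (2 : ℝ) • ∑ k with ε k = -1, v k + ∑ k, ε k • v k := by
  rw [sum_filter, smul_sum, ← sum_add_distrib]
  refine sum_congr rfl fun k _ => ?_
  rcases hε k with h | h <;> norm_num [h, two_smul]

theorem exists_signs_card_filter_neg_one_le (p : Seminorm ℝ E) {N : ℕ}
    (hcard : Fintype.card ι ≤ 2 * N) (v : ι → E) {C : ℝ}
    (h : ∃ ε : ι → ℝ, (∀ k, ε k = 1 ∨ ε k = -1) ∧ p (∑ k, ε k • v k) ≤ C) :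
    ∃ ε : ι → ℝ, (∀ k, ε k = 1 ∨ ε k = -1) ∧ p (∑ k, ε k • v k) ≤ C ∧
      #{k | ε k = -1} ≤ N := by
  obtain ⟨ε, hε, hεC⟩ := h
  by_cases hfew : #{k | ε k = -1} ≤ N
  · exact ⟨ε, hε, hεC, hfew⟩
  refine ⟨-ε, fun k => (hε k).symm.imp (by simp [·]) (by simp [·]), ?_, ?_⟩
  · simpa [neg_smul, sum_neg_distrib] using hεC
  · have hflip : #{k | (-ε) k = -1} = #{k | ¬ε k = -1} := by
      refine congrArg card (filter_congr fun k _ => ?_)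
      rcases hε k with h | h <;> simp [h] <;> norm_num
    have := card_filter_add_card_filter_not (s := univ) (fun k => ε k = -1)
    rw [card_univ] at this
    omega

end SignSums

theorem Seminorm.mem_smul_closedBall_zero_of_le {E : Type*} [AddCommGroup E] [Module ℝ E]
    (p : Seminorm ℝ E) (hp : ∀ x, p x = 0 → x = 0) {β : ℝ} (hβ : 0 ≤ β) {x : E}
    (hx : p x ≤ β) : x ∈ β • p.closedBall 0 1 := by
  rcases hβ.eq_or_lt with rfl | hβ
  · rw [hp x (le_antisymm hx (apply_nonneg p x))]
    exact Set.zero_mem_smul_set (p.mem_closedBall_zero.2 (by simp))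
  · rwa [p.smul_closedBall_zero (norm_pos_iff.2 hβ.ne'), p.mem_closedBall_zero,
      Real.norm_of_nonneg hβ.le, mul_one]

theorem subset_add_sum_smul_of_two_mul_subset {E : Type*} [AddCommGroup E] [Module ℝ E]
    {D : ℕ → Set E} {B : Set E} (hB : Convex ℝ B) {β : ℕ → ℝ} (hβ : ∀ N, 0 ≤ β N)
    {m : ℕ} (hm : 0 < m) (hstep : ∀ N, 0 < N → D (2 * N) ⊆ D N + β (2 * N) • B)
    {k : ℕ} (hk : 1 ≤ k) : D (2 ^ k * m) ⊆ D m + (∑ j ∈ Icc 1 k, β (2 ^ j * m)) • B := by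
  induction k, hk using Nat.le_induction with
  | base => simpa using hstep m hm
  | succ k hk ih =>
    rw [sum_Icc_succ_top (by omega), hB.add_smul (sum_nonneg fun j _ => hβ _) (hβ _),
      ← add_assoc, pow_succ', mul_assoc]
    exact (hstep _ (by positivity)).trans (Set.add_subset_add_right ih)

section Averages

variable {E : Type*} [NormedAddCommGroup E] [NormedSpace ℝ E] {S : Set E}

theorem smul_sum_fin_mem_deltaM (hS : S.Nonempty) {M N : ℕ} (hMN : M ≤ N)
    {c : Fin M → ℝ} {x : Fin M → E} (hc : ∀ k, |c k| ≤ 1) (hx : ∀ k, x k ∈ S) :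
    (N : ℝ)⁻¹ • ∑ k, c k • x k ∈ deltaM N S := by
  obtain ⟨s₀, hs₀⟩ := hS
  obtain ⟨r, rfl⟩ := Nat.exists_eq_add_of_le hMN
  refine ⟨Fin.append c 0, Fin.append x fun _ => s₀, Fin.addCases (by simpa) (by simp),
    Fin.addCases (by simpa) (by simp [hs₀]), ?_⟩
  simp [Fin.sum_univ_add]

theorem smul_sum_mem_deltaM {ι : Type*} (hS : S.Nonempty) {N : ℕ} (s : Finset ι)
    (hs : #s ≤ N) {c : ι → ℝ} {x : ι → E} (hc : ∀ k ∈ s, |c k| ≤ 1)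
    (hx : ∀ k ∈ s, x k ∈ S) :
    (N : ℝ)⁻¹ • ∑ k ∈ s, c k • x k ∈ deltaM N S := by
  rw [← sum_coe_sort s, ← s.equivFin.symm.sum_comp]
  exact smul_sum_fin_mem_deltaM hS hs (fun k => hc _ (Subtype.prop _))
    (fun k => hx _ (Subtype.prop _))

theorem exists_mem_deltaM_sub_le_of_mem_deltaM_two_mul (p : Seminorm ℝ E)
    (hpS : ∀ x ∈ S, p x ≤ 1) {N : ℕ} (hN : 0 < N) {β : ℝ} (hβ0 : 0 ≤ β)
    (hβ : ∀ v : Fin (2 * N) → E, ∃ ε : Fin (2 * N) → ℝ,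
      (∀ k, ε k = 1 ∨ ε k = -1) ∧ p (∑ k, ε k • v k) ≤ β * (2 * N : ℕ) * ⨆ k, p (v k))
    {y : E} (hy : y ∈ deltaM (2 * N) S) : ∃ z ∈ deltaM N S, p (y - z) ≤ β := by
  obtain ⟨c, x, hc, hx, rfl⟩ := hy
  have : NeZero (2 * N) := ⟨by omega⟩
  have hS : S.Nonempty := ⟨x 0, hx 0⟩
  have hv : ∀ k, p (c k • x k) ≤ 1 := fun k => by
    rw [map_smul_eq_mul, Real.norm_eq_abs]
    exact mul_le_one₀ (hc k) (apply_nonneg _ _) (hpS _ (hx k))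
  obtain ⟨ε₀, hε₀, hε₀p⟩ := hβ fun k => c k • x k
  obtain ⟨ε, hε, hεp, hcard⟩ := exists_signs_card_filter_neg_one_le p (N := N) (by simp) _
    ⟨ε₀, hε₀, hε₀p.trans (mul_le_of_le_one_right (by positivity) (ciSup_le hv))⟩
  refine ⟨(N : ℝ)⁻¹ • ∑ k with ε k = -1, c k • x k,
    smul_sum_mem_deltaM hS _ hcard (fun k _ => hc k) (fun k _ => hx k), ?_⟩
  rw [sum_eq_two_smul_sum_filter_add_sum_sign_smul _ hε]
  have hhalf : ((2 * N : ℕ) : ℝ)⁻¹ * 2 = (N : ℝ)⁻¹ := by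
    have : (N : ℝ) ≠ 0 := by positivity
    push_cast
    field_simp
  rw [smul_add, smul_smul, hhalf, add_sub_cancel_left, map_smul_eq_mul,
    norm_inv, Real.norm_natCast, inv_mul_le_iff₀ (by positivity)]
  linarith

theorem deltaM_two_mul_subset (p : Seminorm ℝ E) (hp : ∀ x, p x = 0 → x = 0)
    (hpS : ∀ x ∈ S, p x ≤ 1) {N : ℕ} (hN : 0 < N) {β : ℝ} (hβ0 : 0 ≤ β)
    (hβ : ∀ v : Fin (2 * N) → E, ∃ ε : Fin (2 * N) → ℝ,
      (∀ k, ε k = 1 ∨ ε k = -1) ∧ p (∑ k, ε k • v k) ≤ β * (2 * N : ℕ) * ⨆ k, p (v k)) :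
    deltaM (2 * N) S ⊆ deltaM N S + β • p.closedBall 0 1 := by
  intro y hy
  obtain ⟨z, hz, hyz⟩ := exists_mem_deltaM_sub_le_of_mem_deltaM_two_mul p hpS hN hβ0 hβ hy
  exact Set.mem_add.2
    ⟨z, hz, y - z, p.mem_smul_closedBall_zero_of_le hp hβ0 hyz, add_sub_cancel z y⟩

end Averages

theorem stmt_9_general (n : ℕ) (S : Set (EuclideanSpace ℝ (Fin n)))
    (ν : EuclideanSpace ℝ (Fin n) → ℝ)
    (hν0 : ∀ x, ν x = 0 → x = 0)
    (hνadd : ∀ x y, ν (x + y) ≤ ν x + ν y)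
    (hνsmul : ∀ (a : ℝ) x, ν (a • x) = |a| * ν x)
    (hball : {x | ν x ≤ 1} = convexHull ℝ (S ∪ -S))
    (b : ℕ → ℝ) (hb : ∀ N, IsLeastSignBalanceFor ν N (b N))
    (m : ℕ) (hm : 0 < m) :
    ∀ k : ℕ, 1 ≤ k →
      deltaM (2 ^ k * m) S ⊆
        deltaM m S + (∑ j ∈ Finset.Icc 1 k, b (2 ^ j * m)) • convexHull ℝ (S ∪ -S) := by
  intro k hk
  let p : Seminorm ℝ (EuclideanSpace ℝ (Fin n)) :=
    Seminorm.of ν hνadd fun a x => by rw [hνsmul, Real.norm_eq_abs]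
  have hB : p.closedBall 0 1 = convexHull ℝ (S ∪ -S) := p.closedBall_zero_eq.trans hball
  have hpS : ∀ x ∈ S, p x ≤ 1 := fun x hx =>
    hB.symm.subset (subset_convexHull ℝ _ (Set.mem_union_left _ hx)) |> p.mem_closedBall_zero.1
  rw [← hB]
  exact subset_add_sum_smul_of_two_mul_subset (D := fun N => deltaM N S)
    (p.convex_closedBall 0 1) (fun N => (hb N).1.1) hm
    (fun N hN => deltaM_two_mul_subset p hν0 hpS hN (hb _).1.1 (hb _).1.2) hk

theorem stmt_9 (n : ℕ) (S : Set (EuclideanSpace ℝ (Fin n)))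
    (hScpt : IsCompact S) (hSspan : Submodule.span ℝ S = ⊤)
    (ν : EuclideanSpace ℝ (Fin n) → ℝ)
    (hν0 : ∀ x, ν x = 0 → x = 0)
    (hνadd : ∀ x y, ν (x + y) ≤ ν x + ν y)
    (hνsmul : ∀ (a : ℝ) x, ν (a • x) = |a| * ν x)
    (hball : {x | ν x ≤ 1} = convexHull ℝ (S ∪ -S))
    (b : ℕ → ℝ) (hb : ∀ N, IsLeastSignBalanceFor ν N (b N))
    (m : ℕ) (hm : 0 < m) :
    ∀ k : ℕ, 1 ≤ k →
      deltaM (2 ^ k * m) S ⊆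
        deltaM m S + (∑ j ∈ Finset.Icc 1 k, b (2 ^ j * m)) • convexHull ℝ (S ∪ -S) :=
  stmt_9_general n S ν hν0 hνadd hνsmul hball b hb m hm
end

section
/- Let 1 ≤ m ≤ N with N ≥ 2, Ω the uniform probability space of m-subsets of {1,…,N}, ξ_i the indicator variables, and x_1,…,x_N ∈ ℝⁿ with ‖x_i‖₂² ≤ n·d² for all i. Set y = (1/N)Σx_i. Then E‖(1/m)Σ ξ_i x_i − y‖₂² ≤ n·d²/m. -/
/-!
With `z i = x i - y` we have `∑ z i = 0`, and for `#ω = m` the error `m⁻¹ • ∑_{i ∈ ω} x i - y`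
is `m⁻¹ • ∑_{i ∈ ω} z i`. Expanding the square and exchanging sums, `∑_ω ‖∑_{i ∈ ω} z i‖²` only
sees the number `c₁` of `m`-subsets through a point and the number `c₂` through a pair of distinct
points, so it equals `(c₁ - c₂) ∑ ‖z i‖² + c₂ ‖∑ z i‖² ≤ c₁ ∑ ‖z i‖² ≤ c₁ ∑ ‖x i‖²`, the last step
because `y` is the mean. Double counting incidences gives `N c₁ = m · #{m-subsets}`.
-/

open Finset RealInnerProductSpace

section PairCounts

variable {ι : Type*} [Fintype ι] [DecidableEq ι]

lemma card_filter_mem_powersetCard_univ (i : ι) {m : ℕ} (hm : 1 ≤ m) :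
    #{ω ∈ powersetCard m (univ : Finset ι) | i ∈ ω} = (Fintype.card ι - 1).choose (m - 1) := by
  simpa using card_filter_powersetCard_subset {i} univ m (subset_univ _) (by simpa using hm)

lemma card_mul_choose_eq_card_powersetCard_mul {m : ℕ} (hm : 1 ≤ m) :
    Fintype.card ι * (Fintype.card ι - 1).choose (m - 1)
      = #(powersetCard m (univ : Finset ι)) * m :=
  (sum_card fun i => card_filter_mem_powersetCard_univ i hm).symm.trans
    (sum_const_nat fun _ hω => (mem_powersetCard.1 hω).2)

lemma exists_card_filter_mem_mem_powersetCard_univ (m : ℕ) :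
    ∃ c : ℕ, ∀ i j : ι, i ≠ j →
      #{ω ∈ powersetCard m (univ : Finset ι) | i ∈ ω ∧ j ∈ ω} = c := by
  by_cases hm : 2 ≤ m
  · refine ⟨(Fintype.card ι - 2).choose (m - 2), fun i j hij => ?_⟩
    simpa [insert_subset_iff, card_pair hij] using
      card_filter_powersetCard_subset {i, j} univ m (subset_univ _) (by rwa [card_pair hij])
  · refine ⟨0, fun i j hij => card_eq_zero.2 (filter_eq_empty_iff.2 ?_)⟩
    rintro ω hω ⟨hi, hj⟩
    have := card_le_card (insert_subset hi (singleton_subset_iff.2 hj))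
    rw [card_pair hij, (mem_powersetCard.1 hω).2] at this
    omega

end PairCounts

section SumOfSquares

variable {ι E : Type*} [NormedAddCommGroup E] [InnerProductSpace ℝ E]

lemma norm_sum_sq_eq_sum_sum_inner (s : Finset ι) (z : ι → E) :
    ‖∑ i ∈ s, z i‖ ^ 2 = ∑ i ∈ s, ∑ j ∈ s, ⟪z i, z j⟫ := by
  rw [← real_inner_self_eq_norm_sq, sum_inner]
  simp_rw [inner_sum]

variable [Fintype ι]

lemma sum_norm_sub_sq_le_of_sum_eq (x : ι → E) (y : E)
    (hy : ∑ i, x i = (Fintype.card ι : ℝ) • y) :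
    ∑ i, ‖x i - y‖ ^ 2 ≤ ∑ i, ‖x i‖ ^ 2 := by
  have hexpand : ∑ i, ‖x i - y‖ ^ 2 = ∑ i, ‖x i‖ ^ 2 - Fintype.card ι * ‖y‖ ^ 2 := by
    simp_rw [norm_sub_sq_real, sum_add_distrib, sum_sub_distrib, ← mul_sum, ← sum_inner, hy,
      real_inner_smul_left, real_inner_self_eq_norm_sq, sum_const, card_univ, nsmul_eq_mul]
    ring
  rw [hexpand]
  exact sub_le_self _ (by positivity)

variable [DecidableEq ι]

theorem sum_norm_sum_sq_of_pair_counts (𝒜 : Finset (Finset ι)) (z : ι → E) {c₁ c₂ : ℕ}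
    (h₁ : ∀ i, #{ω ∈ 𝒜 | i ∈ ω} = c₁) (h₂ : ∀ i j, i ≠ j → #{ω ∈ 𝒜 | i ∈ ω ∧ j ∈ ω} = c₂) :
    ∑ ω ∈ 𝒜, ‖∑ i ∈ ω, z i‖ ^ 2
      = ((c₁ : ℝ) - c₂) * ∑ i, ‖z i‖ ^ 2 + c₂ * ‖∑ i, z i‖ ^ 2 := by
  have hcount (i j : ι) : (#{ω ∈ 𝒜 | i ∈ ω ∧ j ∈ ω} : ℝ)
      = (if i = j then (c₁ - c₂ : ℝ) else 0) + c₂ := by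
    split_ifs with h
    · subst h; simp [h₁]
    · simp [h₂ i j h]
  calc ∑ ω ∈ 𝒜, ‖∑ i ∈ ω, z i‖ ^ 2
      = ∑ ω ∈ 𝒜, ∑ i, ∑ j, if i ∈ ω ∧ j ∈ ω then ⟪z i, z j⟫ else 0 := by
        simp [norm_sum_sq_eq_sum_sum_inner, ite_and, sum_ite_mem]
    _ = ∑ i, ∑ j, (#{ω ∈ 𝒜 | i ∈ ω ∧ j ∈ ω} : ℝ) * ⟪z i, z j⟫ := by
        simp_rw [card_filter, Nat.cast_sum, sum_mul]
        rw [sum_comm]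
        refine sum_congr rfl fun i _ => ?_
        rw [sum_comm]
        simp
    _ = ((c₁ : ℝ) - c₂) * ∑ i, ‖z i‖ ^ 2 + c₂ * ‖∑ i, z i‖ ^ 2 := by
        simp_rw [hcount, add_mul, sum_add_distrib, ite_mul, zero_mul, sum_ite_eq,
          if_pos (mem_univ _), real_inner_self_eq_norm_sq, ← mul_sum, norm_sum_sq_eq_sum_sum_inner]

theorem sum_powersetCard_norm_sum_sq_le {m : ℕ} (hm : 1 ≤ m) (z : ι → E) (hz : ∑ i, z i = 0) :
    ∑ ω ∈ powersetCard m univ, ‖∑ i ∈ ω, z i‖ ^ 2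
      ≤ (Fintype.card ι - 1).choose (m - 1) * ∑ i, ‖z i‖ ^ 2 := by
  obtain ⟨c₂, h₂⟩ := exists_card_filter_mem_mem_powersetCard_univ (ι := ι) m
  rw [sum_norm_sum_sq_of_pair_counts _ z (fun i => card_filter_mem_powersetCard_univ i hm) h₂,
    hz, norm_zero]
  have : 0 ≤ (c₂ : ℝ) * ∑ i, ‖z i‖ ^ 2 := by positivity
  linarith

theorem sum_powersetCard_norm_inv_smul_sum_sub_sq_le {m : ℕ} (hm : 1 ≤ m) (x : ι → E) (y : E)
    (hy : ∑ i, x i = (Fintype.card ι : ℝ) • y) :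
    ∑ ω ∈ powersetCard m univ, ‖(m : ℝ)⁻¹ • ∑ i ∈ ω, x i - y‖ ^ 2
      ≤ (m : ℝ)⁻¹ ^ 2 * ((Fintype.card ι - 1).choose (m - 1) * ∑ i, ‖x i‖ ^ 2) := by
  have hnorm (ω) (hω : ω ∈ powersetCard m univ) :
      ‖(m : ℝ)⁻¹ • ∑ i ∈ ω, x i - y‖ ^ 2 = (m : ℝ)⁻¹ ^ 2 * ‖∑ i ∈ ω, (x i - y)‖ ^ 2 := by
    have : (m : ℝ)⁻¹ • ∑ i ∈ ω, x i - y = (m : ℝ)⁻¹ • ∑ i ∈ ω, (x i - y) := by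
      rw [sum_sub_distrib, sum_const, (mem_powersetCard.1 hω).2, smul_sub,
        ← Nat.cast_smul_eq_nsmul ℝ, inv_smul_smul₀ (by positivity)]
    rw [this, norm_smul, mul_pow, norm_inv, RCLike.norm_natCast]
  have hz : ∑ i, (x i - y) = 0 := by
    rw [sum_sub_distrib, hy, sum_const, card_univ, Nat.cast_smul_eq_nsmul, sub_self]
  rw [sum_congr rfl hnorm, ← mul_sum]
  gcongr
  calc _ ≤ _ := sum_powersetCard_norm_sum_sq_le hm _ hz
    _ ≤ _ := mul_le_mul_of_nonneg_left (sum_norm_sub_sq_le_of_sum_eq x y hy) (by positivity)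

end SumOfSquares

theorem stmt_15_general (N m n : ℕ) (hm : 1 ≤ m) (d : ℝ)
    (x : Fin N → EuclideanSpace ℝ (Fin n)) (hx : ∀ i, ‖x i‖ ^ 2 ≤ n * d ^ 2)
    (y : EuclideanSpace ℝ (Fin n)) (hy : y = (N : ℝ)⁻¹ • ∑ i, x i) :
    (∑ ω ∈ Finset.powersetCard m (Finset.univ : Finset (Fin N)),
        ‖(m : ℝ)⁻¹ • (∑ i ∈ ω, x i) - y‖ ^ 2) /
      (Finset.powersetCard m (Finset.univ : Finset (Fin N))).card ≤ n * d ^ 2 / m := by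
  set P := powersetCard m (univ : Finset (Fin N))
  have hsum : ∑ i, x i = (N : ℝ) • y := by
    rcases N.eq_zero_or_pos with rfl | hN
    · simp
    · rw [hy, smul_inv_smul₀ (by positivity)]
  have hdouble : (N : ℝ) * (N - 1).choose (m - 1) = #P * m := by
    have := card_mul_choose_eq_card_powersetCard_mul (ι := Fin N) hm
    rw [Fintype.card_fin] at this
    exact_mod_cast this
  have hsq : ∑ i, ‖x i‖ ^ 2 ≤ N * (n * d ^ 2) := by
    simpa using sum_le_sum (s := univ) fun i _ => hx i
  have hbound : ∑ ω ∈ P, ‖(m : ℝ)⁻¹ • ∑ i ∈ ω, x i - y‖ ^ 2 ≤ n * d ^ 2 / m * #P :=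
    calc _ ≤ (m : ℝ)⁻¹ ^ 2 * ((N - 1).choose (m - 1) * ∑ i, ‖x i‖ ^ 2) := by
          simpa using sum_powersetCard_norm_inv_smul_sum_sub_sq_le hm x y (by simpa using hsum)
      _ ≤ (m : ℝ)⁻¹ ^ 2 * ((N - 1).choose (m - 1) * (N * (n * d ^ 2))) := by gcongr
      _ = n * d ^ 2 / m * #P := by
          have hmm : (m : ℝ) * (m : ℝ)⁻¹ = 1 := mul_inv_cancel₀ (by positivity)
          rw [div_eq_mul_inv]
          linear_combination ((m : ℝ)⁻¹ ^ 2 * (n * d ^ 2)) * hdouble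
            + (n * d ^ 2 * #P * (m : ℝ)⁻¹) * hmm
  exact div_le_of_le_mul₀ (Nat.cast_nonneg _) (by positivity) hbound

theorem stmt_15 (N m n : ℕ) (hm : 1 ≤ m) (hmN : m ≤ N) (hN : 2 ≤ N) (d : ℝ) (hd : 0 < d)
    (x : Fin N → EuclideanSpace ℝ (Fin n)) (hx : ∀ i, ‖x i‖ ^ 2 ≤ n * d ^ 2)
    (y : EuclideanSpace ℝ (Fin n)) (hy : y = (N : ℝ)⁻¹ • ∑ i, x i) :
    (∑ ω ∈ Finset.powersetCard m (Finset.univ : Finset (Fin N)),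
        ‖(m : ℝ)⁻¹ • (∑ i ∈ ω, x i) - y‖ ^ 2) /
      (Finset.powersetCard m (Finset.univ : Finset (Fin N))).card ≤ n * d ^ 2 / m :=
  stmt_15_general N m n hm d x hx y hy
end

section
/- Let Y be a finite-dimensional inner product space with unit ball 𝓔 and S ⊆ Y a set with 𝓔 ⊆ S ∪ (−S) + r·𝓔 and S ⊆ (1+η)𝓔, where 0 ≤ r < 1 and η ≥ 0. Then for every θ with r ≤ θ < 1, (1−θ)·𝓔 ⊆ Γ_θ S ⊆ (1+η)·𝓔, where Γ_θ S = {(1−θ)Σ_{k≥0} λ_k x_k : |λ_k| ≤ θ^k, x_k ∈ S}. -/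
open Pointwise

/-!
Since `𝓔 ⊆ ±S + r𝓔`, every `y ∈ 𝓔` can be written `y = ε₀x₀ + r w₁` with `ε₀ = ±1`, `x₀ ∈ S`,
`w₁ ∈ 𝓔`; repeating this on `w₁, w₂, …` gives `y = Σ rᵏ εₖ xₖ`, the remainder after `n` steps
lying in `rⁿ𝓔`. As `|rᵏεₖ| ≤ θᵏ`, this puts `(1 - θ)y` in `Γ_θ S`. Conversely, a point of
`Γ_θ S` has norm at most `(1 - θ) Σ θᵏ (1 + η) = 1 + η`.
-/

open Metric Finset Filter

section Geometric

variable {E : Type*} [NormedAddCommGroup E] [NormedSpace ℝ E]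

theorem geomHull_subset_closedBall {θ R : ℝ} {S : Set E} (hθ0 : 0 ≤ θ) (hθ1 : θ < 1)
    (hS : S ⊆ closedBall 0 R) : geomHull θ S ⊆ closedBall 0 R := by
  rintro y ⟨c, x, hc, hxS, hy⟩
  have hbound : ∀ k, ‖((1 - θ) * c k) • x k‖ ≤ R * (1 - θ) * θ ^ k := by
    intro k
    have hx : ‖x k‖ ≤ R := mem_closedBall_zero_iff.mp (hS (hxS k))
    rw [norm_smul, Real.norm_eq_abs, abs_mul, abs_of_pos (sub_pos.mpr hθ1)]
    calc (1 - θ) * |c k| * ‖x k‖ ≤ (1 - θ) * θ ^ k * R := by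
          gcongr
          exact hc k
      _ = R * (1 - θ) * θ ^ k := by ring
  have hgeom : HasSum (fun k => R * (1 - θ) * θ ^ k) R := by
    simpa only [mul_inv_cancel_right₀ (sub_pos.mpr hθ1).ne'] using
      (hasSum_geometric_of_lt_one hθ0 hθ1).mul_left (R * (1 - θ))
  exact mem_closedBall_zero_iff.mpr (hy.norm_le_of_bounded hgeom hbound)

theorem smul_mem_geomHull_of_hasSum {θ : ℝ} {S : Set E} {c : ℕ → ℝ} {x : ℕ → E} {y : E}
    (hc : ∀ k, |c k| ≤ θ ^ k) (hx : ∀ k, x k ∈ S) (hy : HasSum (fun k => c k • x k) y) :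
    (1 - θ) • y ∈ geomHull θ S :=
  ⟨c, x, hc, hx, by simpa only [mul_smul] using hy.const_smul (1 - θ)⟩

theorem exists_seq_sub_sum_mem_pow_smul_closedBall {T : Set E} {r : ℝ}
    (h : closedBall (0 : E) 1 ⊆ T + r • closedBall (0 : E) 1) {y : E}
    (hy : y ∈ closedBall (0 : E) 1) :
    ∃ t : ℕ → E, (∀ k, t k ∈ T) ∧
      ∀ n, y - ∑ k ∈ range n, r ^ k • t k ∈ r ^ n • closedBall (0 : E) 1 := by
  have step : ∀ v : closedBall (0 : E) 1, ∃ t ∈ T, ∃ w : closedBall (0 : E) 1,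
      (v : E) = t + r • (w : E) := by
    rintro ⟨v, hv⟩
    obtain ⟨t, ht, _, ⟨w, hw, rfl⟩, rfl⟩ := h hv
    exact ⟨t, ht, ⟨w, hw⟩, rfl⟩
  choose t ht next hnext using step
  let w : ℕ → closedBall (0 : E) 1 := fun n => next^[n] ⟨y, hy⟩
  have hrem : ∀ n, y - ∑ k ∈ range n, r ^ k • t (w k) = r ^ n • (w n : E) := by
    intro n
    induction n with
    | zero => simp [w]
    | succ n ih =>
      have hw : w (n + 1) = next (w n) := Function.iterate_succ_apply' next n _
      rw [sum_range_succ, sub_add_eq_sub_sub, ih, hnext (w n), hw, pow_succ, mul_smul,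
        smul_add]
      abel
  exact ⟨fun k => t (w k), fun k => ht _, fun n => ⟨w n, (w n).2, (hrem n).symm⟩⟩

theorem exists_hasSum_pow_smul_of_closedBall_subset {T : Set E} {r M : ℝ} (hr0 : 0 ≤ r)
    (hr1 : r < 1) (hT : T ⊆ closedBall 0 M)
    (h : closedBall (0 : E) 1 ⊆ T + r • closedBall (0 : E) 1) {y : E}
    (hy : y ∈ closedBall (0 : E) 1) :
    ∃ t : ℕ → E, (∀ k, t k ∈ T) ∧ HasSum (fun k => r ^ k • t k) y := by
  obtain ⟨t, ht, hrem⟩ := exists_seq_sub_sum_mem_pow_smul_closedBall h hy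
  refine ⟨t, ht, hasSum_of_subseq_of_summable ?_ tendsto_finset_range ?_⟩
  · refine Summable.of_nonneg_of_le (fun k => norm_nonneg _) (fun k => ?_)
      ((summable_geometric_of_lt_one hr0 hr1).mul_right M)
    rw [norm_smul, Real.norm_eq_abs, abs_of_nonneg (pow_nonneg hr0 k)]
    exact mul_le_mul_of_nonneg_left (mem_closedBall_zero_iff.mp (hT (ht k))) (pow_nonneg hr0 k)
  · rw [tendsto_iff_norm_sub_tendsto_zero]
    refine squeeze_zero (fun n => norm_nonneg _) (fun n => ?_)
      (tendsto_pow_atTop_nhds_zero_of_lt_one hr0 hr1)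
    rw [norm_sub_rev, ← mem_closedBall_zero_iff, ← abs_of_nonneg (pow_nonneg hr0 n),
      ← Real.norm_eq_abs, ← smul_unitClosedBall]
    exact hrem n

theorem exists_abs_le_one_smul_of_mem_union_neg {S : Set E} {t : E} (ht : t ∈ S ∪ -S) :
    ∃ ε : ℝ, |ε| ≤ 1 ∧ ∃ x ∈ S, t = ε • x := by
  rcases ht with ht | ht
  · exact ⟨1, by norm_num, t, ht, (one_smul ℝ t).symm⟩
  · exact ⟨-1, by norm_num, -t, ht, by simp⟩

theorem smul_closedBall_subset_geomHull {S : Set E} {r θ M : ℝ} (hr0 : 0 ≤ r) (hrθ : r ≤ θ)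
    (hθ1 : θ < 1) (hS : S ⊆ closedBall 0 M)
    (h : closedBall (0 : E) 1 ⊆ (S ∪ -S) + r • closedBall (0 : E) 1) :
    (1 - θ) • closedBall (0 : E) 1 ⊆ geomHull θ S := by
  have hT : S ∪ -S ⊆ closedBall 0 M := by
    rintro t (ht | ht)
    · exact hS ht
    · simpa using hS ht
  rintro _ ⟨y, hy, rfl⟩
  obtain ⟨t, ht, hsum⟩ :=
    exists_hasSum_pow_smul_of_closedBall_subset hr0 (hrθ.trans_lt hθ1) hT h hy
  choose ε hε x hx htx using fun k => exists_abs_le_one_smul_of_mem_union_neg (ht k)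
  refine smul_mem_geomHull_of_hasSum (c := fun k => r ^ k * ε k) (fun k => ?_) hx ?_
  · rw [abs_mul, abs_of_nonneg (pow_nonneg hr0 k)]
    calc r ^ k * |ε k| ≤ r ^ k * 1 := by gcongr; exact hε k
      _ ≤ θ ^ k := by rw [mul_one]; gcongr
  · simpa only [htx, mul_smul] using hsum

end Geometric

theorem stmt_18_general {Y : Type*} [NormedAddCommGroup Y] [InnerProductSpace ℝ Y]
    (S : Set Y) (r η : ℝ) (hr0 : 0 ≤ r)
    (h1 : Metric.closedBall (0 : Y) 1 ⊆ (S ∪ -S) + r • Metric.closedBall (0 : Y) 1)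
    (h2 : S ⊆ (1 + η) • Metric.closedBall (0 : Y) 1) :
    ∀ θ : ℝ, r ≤ θ → θ < 1 →
      (1 - θ) • Metric.closedBall (0 : Y) 1 ⊆ geomHull θ S ∧
      geomHull θ S ⊆ (1 + η) • Metric.closedBall (0 : Y) 1 := by
  intro θ hrθ hθ1
  rw [smul_unitClosedBall] at h2
  rw [smul_unitClosedBall (1 + η)]
  exact ⟨smul_closedBall_subset_geomHull hr0 hrθ hθ1 h2 h1,
    geomHull_subset_closedBall (hr0.trans hrθ) hθ1 h2⟩

theorem stmt_18 {Y : Type*} [NormedAddCommGroup Y] [InnerProductSpace ℝ Y]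
    [FiniteDimensional ℝ Y] (S : Set Y) (r η : ℝ) (hr0 : 0 ≤ r) (hr1 : r < 1) (hη : 0 ≤ η)
    (h1 : Metric.closedBall (0 : Y) 1 ⊆ (S ∪ -S) + r • Metric.closedBall (0 : Y) 1)
    (h2 : S ⊆ (1 + η) • Metric.closedBall (0 : Y) 1) :
    ∀ θ : ℝ, r ≤ θ → θ < 1 →
      (1 - θ) • Metric.closedBall (0 : Y) 1 ⊆ geomHull θ S ∧
      geomHull θ S ⊆ (1 + η) • Metric.closedBall (0 : Y) 1 :=
  stmt_18_general S r η hr0 h1 h2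
end

section
/- Let 0 < ε < 1, let n, k be integers with 0 < k < n and 1 − k/n = tε/(1 − ln ε) for some 0 < t ≤ 1/2. Then log₂ C(n,k) ≤ n·t·ε·ln(e·ln(e/ε)/(t·ε))/((1 − ln ε)·ln 2), and this is at most 3·k·t·ε·(2 − ln t). -/
/-!
With `L = 1 - log ε = log (e / ε)` the hypothesis says `n - k = n t ε / L`, so the estimate
`C(n, k) = C(n, n - k) ≤ (n e / (n - k)) ^ (n - k)` is exactly the first inequality. For the second,
`log (e L / (t ε)) = L + log L - log t ≤ L (2 - log t)`, `n ≤ 2k` because `t ε / L ≤ 1/2`,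
and `2 / log 2 ≤ 3`.
-/

open Real

theorem Nat.choose_le_mul_exp_div_pow (n r : ℕ) :
    (n.choose r : ℝ) ≤ (n * exp 1 / r) ^ r := by
  rcases r.eq_zero_or_pos with rfl | hr
  · simp
  have hr' : (0 : ℝ) < r := by exact_mod_cast hr
  calc (n.choose r : ℝ) ≤ (n : ℝ) ^ r / r.factorial := Nat.choose_le_pow_div r n
    _ = (n / r : ℝ) ^ r * ((r : ℝ) ^ r / r.factorial) := by
        rw [div_pow]; field_simp
    _ ≤ (n / r : ℝ) ^ r * exp r := by
        gcongr; exact pow_div_factorial_le_exp _ hr'.le r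
    _ = (n * exp 1 / r) ^ r := by
        rw [← exp_one_pow, mul_div_right_comm, mul_pow]

theorem logb_choose_le {n k : ℕ} (hkn : k < n) :
    logb 2 (n.choose k) ≤ (n - k) * log (n * exp 1 / (n - k)) / log 2 := by
  have hsub : ((n - k : ℕ) : ℝ) = n - k := by push_cast [hkn.le]; ring
  rw [logb, ← hsub, ← log_pow, ← Nat.choose_symm hkn.le]
  gcongr
  · exact_mod_cast Nat.choose_pos (n.sub_le k)
  · exact Nat.choose_le_mul_exp_div_pow n (n - k)

theorem log_exp_mul_one_sub_log_div_le {ε t : ℝ} (hε0 : 0 < ε) (hε1 : ε ≤ 1) (ht0 : 0 < t) (ht1 : t ≤ 1) :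
    log (exp 1 * (1 - log ε) / (t * ε)) ≤ (1 - log ε) * (2 - log t) := by
  have hL : 1 ≤ 1 - log ε := by linarith [log_nonpos hε0.le hε1]
  have hlogt : log t ≤ 0 := log_nonpos ht0.le ht1
  rw [log_div (by positivity) (by positivity), log_mul (exp_ne_zero 1) (by positivity),
    log_mul ht0.ne' hε0.ne', log_exp]
  nlinarith [log_le_sub_one_of_pos (show 0 < 1 - log ε by linarith)]

theorem stmt_19_general (ε t : ℝ) (n k : ℕ) (hε0 : 0 < ε) (hε1 : ε < 1)
    (hkn : k < n) (ht0 : 0 < t) (ht : t ≤ 1 / 2)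
    (hdef : 1 - (k : ℝ) / n = t * ε / (1 - Real.log ε)) :
    Real.logb 2 (n.choose k) ≤
      (n : ℝ) * t * ε * Real.log (Real.exp 1 * Real.log (Real.exp 1 / ε) / (t * ε)) /
        ((1 - Real.log ε) * Real.log 2) ∧
    (n : ℝ) * t * ε * Real.log (Real.exp 1 * Real.log (Real.exp 1 / ε) / (t * ε)) /
        ((1 - Real.log ε) * Real.log 2) ≤ 3 * k * t * ε * (2 - Real.log t) := by
  set L := 1 - log ε
  have hL1 : 1 ≤ L := by linarith [log_nonpos hε0.le hε1.le]
  have hn : (0 : ℝ) < n := by exact_mod_cast Nat.zero_lt_of_lt hkn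
  have hlog : log (exp 1 / ε) = L := by rw [log_div (exp_ne_zero 1) hε0.ne', log_exp]
  have hsub : (n : ℝ) - k = n * t * ε / L := by
    rw [← div_left_inj' hn.ne', ← one_sub_div hn.ne', hdef]; field_simp
  have harg : n * exp 1 / (n - k) = exp 1 * L / (t * ε) := by
    rw [hsub]; field_simp
  have hrhs : n * t * ε * log (exp 1 * log (exp 1 / ε) / (t * ε)) / (L * log 2) =
      (n - k) * log (n * exp 1 / (n - k)) / log 2 := by
    rw [harg, hsub, hlog]; field_simp
  have hnk : (n : ℝ) ≤ 2 * k := by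
    have htε : t * ε ≤ 1 / 2 * L := by nlinarith
    have hhalf : (n : ℝ) - k ≤ n / 2 := by rw [hsub, div_le_iff₀ (by linarith)]; nlinarith
    linarith
  refine ⟨hrhs ▸ logb_choose_le hkn, ?_⟩
  have hlog2 : 2 ≤ 3 * log 2 := by linarith [log_two_gt_d9]
  have hX := log_exp_mul_one_sub_log_div_le hε0 hε1.le ht0 (by linarith)
  have h2t : 0 ≤ 2 - log t := by linarith [log_nonpos ht0.le (by linarith : t ≤ 1)]
  rw [hlog, div_le_iff₀ (by positivity)]
  calc n * t * ε * log (exp 1 * L / (t * ε)) ≤ n * t * ε * (L * (2 - log t)) := by gcongr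
    _ ≤ 2 * k * t * ε * (L * (2 - log t)) := by gcongr
    _ ≤ 3 * k * t * ε * (2 - log t) * (L * log 2) := by
        have : 0 ≤ k * t * ε * (L * (2 - log t)) := by positivity
        nlinarith

theorem stmt_19 (ε t : ℝ) (n k : ℕ) (hε0 : 0 < ε) (hε1 : ε < 1)
    (hk0 : 0 < k) (hkn : k < n) (ht0 : 0 < t) (ht : t ≤ 1 / 2)
    (hdef : 1 - (k : ℝ) / n = t * ε / (1 - Real.log ε)) :
    Real.logb 2 (n.choose k) ≤
      (n : ℝ) * t * ε * Real.log (Real.exp 1 * Real.log (Real.exp 1 / ε) / (t * ε)) /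
        ((1 - Real.log ε) * Real.log 2) ∧
    (n : ℝ) * t * ε * Real.log (Real.exp 1 * Real.log (Real.exp 1 / ε) / (t * ε)) /
        ((1 - Real.log ε) * Real.log 2) ≤ 3 * k * t * ε * (2 - Real.log t) :=
  stmt_19_general ε t n k hε0 hε1 hkn ht0 ht hdef
end
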